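/- Let σ ∈ ℂ with 2σ ∉ ℤ and set L = min_{n∈ℤ} |2σ − n|². Then for every t ∈ ℂ the conformal block series satisfies the bound |B(σ,t)| ≤ exp(2|t|/L); more precisely, the sum of the absolute values of the terms of the series defining B(σ,t) is at most exp(2|t|/L). -/

import Mathlib

/-!
Every factor of `b_{λ,μ}(σ)` has the form `±(2σ - n)` with `n ∈ ℤ`, so
`|b_{λ,μ}(σ)|² ≥ L^{|λ|+|μ|}` and the `(λ, μ)` term is at most `w(λ) w(μ)`, where
`w(λ) = (dim λ / |λ|!)² q^{|λ|}` and `q = |t| / L`. By Burnside's formula the weights `w(λ)`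
with `|λ| = n` add up to `q^n / n!`, so `∑ w ≤ e^q` and the double series is bounded by
`e^{2q}`.

Burnside's formula comes from Young's lattice. Standard tableaux are linear extensions of the
cells, and sorting them by the cell carrying the largest label gives the branching rule
`dim λ = ∑_{d removable} dim (λ - d)`. Since a diagram has exactly one more addable than
removable cell, and adding `c` commutes with removing `d ≠ c`, induction on `|λ|` gives
`∑_{c addable} dim (λ + c) = (|λ| + 1) dim λ`, whence
`∑_{|λ|=n+1} (dim λ)² = (n + 1) ∑_{|λ|=n} (dim λ)²`.
-/

open scoped BigOperators

/-- The number of standard Young tableaux of shape `μ`: bijective labelings of the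
cells of `μ` by `{0, …, |μ|-1}` that are monotone for the product (componentwise)
order on cells. -/
noncomputable def dimSYT (μ : YoungDiagram) : ℕ :=
  Nat.card {T : {c // c ∈ μ.cells} ≃ Fin μ.card //
    ∀ c d : {c // c ∈ μ.cells},
      (c : ℕ × ℕ).1 ≤ (d : ℕ × ℕ).1 → (c : ℕ × ℕ).2 ≤ (d : ℕ × ℕ).2 → T c ≤ T d}

/-- `b_{λ,μ}(σ) = ∏_{(k,l)∈λ}(λ'_l − k + μ_k − l + 1 + 2σ) ·
∏_{(k,l)∈μ}(μ'_l − k + λ_k − l + 1 − 2σ)`, written in 0-based coordinates. -/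
noncomputable def bFactor (l m : YoungDiagram) (σ : ℂ) : ℂ :=
  (∏ c ∈ l.cells, ((l.colLen c.2 : ℂ) - c.1 + m.rowLen c.1 - c.2 - 1 + 2 * σ)) *
  (∏ c ∈ m.cells, ((m.colLen c.2 : ℂ) - c.1 + l.rowLen c.1 - c.2 - 1 - 2 * σ))

/-- The general term of the conformal block series `B(σ,t)`. -/
noncomputable def blockTerm (σ t : ℂ) (p : YoungDiagram × YoungDiagram) : ℂ :=
  ((dimSYT p.1 * dimSYT p.2 : ℂ) / ((Nat.factorial p.1.card) * (Nat.factorial p.2.card))) ^ 2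
    * t ^ (p.1.card + p.2.card) / (bFactor p.1 p.2 σ) ^ 2

open Finset

section LinearExtension

variable {α : Type*} {s : Finset α}

noncomputable def equivFinOfInjective {f : s → Fin #s} (hf : f.Injective) : s ≃ Fin #s :=
  .ofBijective f ((Fintype.bijective_iff_injective_and_card f).2 ⟨hf, by simp⟩)

section Erase

variable [DecidableEq α] {d : α} (hd : d ∈ s)

def restrictErase (T : s ≃ Fin #s) (hT : (T ⟨d, hd⟩ : ℕ) + 1 = #s) (x : s.erase d) :
    Fin #(s.erase d) :=
  ⟨T ⟨x, mem_of_mem_erase x.2⟩, by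
    have hne : T ⟨x, mem_of_mem_erase x.2⟩ ≠ T ⟨d, hd⟩ :=
      T.injective.ne (Subtype.coe_ne_coe.1 (ne_of_mem_erase x.2))
    have := (T ⟨x, mem_of_mem_erase x.2⟩).isLt
    rw [card_erase_of_mem hd]
    omega⟩

def extendErase (T : s.erase d ≃ Fin #(s.erase d)) (x : s) : Fin #s :=
  if h : x.1 = d then ⟨#s - 1, by have := card_pos.2 ⟨d, hd⟩; omega⟩
  else ⟨T ⟨x, mem_erase.2 ⟨h, x.2⟩⟩, by
    have := (T ⟨x, mem_erase.2 ⟨h, x.2⟩⟩).isLt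
    have := card_erase_add_one hd
    omega⟩

lemma restrictErase_injective {T : s ≃ Fin #s} (hT : (T ⟨d, hd⟩ : ℕ) + 1 = #s) :
    (restrictErase hd T hT).Injective :=
  fun x y h => Subtype.ext <| by
    have h' := congrArg Fin.val h
    simp only [restrictErase] at h'
    simpa using T.injective (Fin.ext h')

lemma extendErase_of_eq (T : s.erase d ≃ Fin #(s.erase d)) {x : s} (h : x.1 = d) :
    (extendErase hd T x : ℕ) + 1 = #s := by
  have := card_pos.2 ⟨d, hd⟩
  simp only [extendErase, h, dite_true]
  omega

lemma extendErase_of_ne (T : s.erase d ≃ Fin #(s.erase d)) {x : s} (h : x.1 ≠ d) :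
    (extendErase hd T x : ℕ) = T ⟨x, mem_erase.2 ⟨h, x.2⟩⟩ := by
  simp only [extendErase, h, dite_false]

lemma extendErase_injective (T : s.erase d ≃ Fin #(s.erase d)) :
    (extendErase hd T).Injective := by
  have hlt {x : s} (h : x.1 ≠ d) : (extendErase hd T x : ℕ) + 1 < #s := by
    rw [extendErase_of_ne hd T h, ← card_erase_add_one hd]; simp
  intro x y hxy
  have hval := congrArg Fin.val hxy
  by_cases hx : x.1 = d <;> by_cases hy : y.1 = d
  · exact Subtype.ext (hx.trans hy.symm)
  · have := extendErase_of_eq hd T hx; have := hlt hy; omega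
  · have := extendErase_of_eq hd T hy; have := hlt hx; omega
  · rw [extendErase_of_ne hd T hx, extendErase_of_ne hd T hy] at hval
    exact Subtype.ext (by simpa using T.injective (Fin.ext hval))

lemma extendErase_restrictErase {T : s ≃ Fin #s} (hT : (T ⟨d, hd⟩ : ℕ) + 1 = #s) (x : s) :
    extendErase hd (equivFinOfInjective (restrictErase_injective hd hT)) x = T x := by
  refine Fin.ext ?_
  by_cases hx : x.1 = d
  · obtain rfl : x = ⟨d, hd⟩ := Subtype.ext hx
    have := extendErase_of_eq hd (equivFinOfInjective (restrictErase_injective hd hT)) hx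
    omega
  · rw [extendErase_of_ne hd _ hx]
    rfl

lemma restrictErase_extendErase (T : s.erase d ≃ Fin #(s.erase d)) (x : s.erase d) :
    restrictErase hd (equivFinOfInjective (extendErase_injective hd T))
      (extendErase_of_eq hd T rfl) x = T x :=
  Fin.ext (extendErase_of_ne hd T (ne_of_mem_erase x.2))

end Erase

variable [PartialOrder α]

abbrev LinExt (s : Finset α) := {T : s ≃ Fin #s // Monotone T}

noncomputable def linExtCount (s : Finset α) : ℕ := Nat.card (LinExt s)

lemma linExtCount_empty : linExtCount (∅ : Finset α) = 1 := by
  have : IsEmpty (Fin #(∅ : Finset α)) := by rw [card_empty]; infer_instance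
  have : Unique (LinExt (∅ : Finset α)) :=
    ⟨⟨⟨Equiv.equivOfIsEmpty _ _, fun x => isEmptyElim x⟩⟩,
      fun T => Subtype.ext (Equiv.ext fun x => isEmptyElim x)⟩
  exact Nat.card_unique

lemma maximal_of_monotone_of_top {T : s ≃ Fin #s} (hT : Monotone T) {x : s}
    (hx : (T x : ℕ) + 1 = #s) : Maximal (· ∈ s) x.1 := by
  refine ⟨x.2, fun y hy hxy => ?_⟩
  have hle : T x ≤ T ⟨y, hy⟩ := hT (a := x) (b := ⟨y, hy⟩) hxy
  have : T ⟨y, hy⟩ = T x := Fin.ext <| by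
    have := (T ⟨y, hy⟩).isLt
    rw [Fin.le_def] at hle
    omega
  exact (congrArg Subtype.val (T.injective this)).le

variable [DecidableEq α] {d : α}

lemma restrictErase_monotone (hd : d ∈ s) {T : s ≃ Fin #s} (hT : (T ⟨d, hd⟩ : ℕ) + 1 = #s)
    (hmono : Monotone T) : Monotone (restrictErase hd T hT) :=
  fun _ _ h => Fin.le_def.2 (Fin.le_def.1 (hmono (a := ⟨_, _⟩) (b := ⟨_, _⟩) h))

lemma extendErase_monotone (hd : Maximal (· ∈ s) d) {T : s.erase d ≃ Fin #(s.erase d)}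
    (hmono : Monotone T) : Monotone (extendErase hd.1 T) := by
  intro x y hxy
  rw [Fin.le_def]
  by_cases hy : y.1 = d
  · have := extendErase_of_eq hd.1 T hy
    have := (extendErase hd.1 T x).isLt
    omega
  · have hx : x.1 ≠ d := fun hx => hy (le_antisymm (hd.2 y.2 (hx ▸ hxy)) (hx ▸ hxy))
    rw [extendErase_of_ne hd.1 T hx, extendErase_of_ne hd.1 T hy]
    exact hmono (a := ⟨_, _⟩) (b := ⟨_, _⟩) hxy

noncomputable def linExtTopEquiv (hd : Maximal (· ∈ s) d) :
    {T : LinExt s // (T.1 ⟨d, hd.1⟩ : ℕ) + 1 = #s} ≃ LinExt (s.erase d) where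
  toFun T := ⟨equivFinOfInjective (restrictErase_injective hd.1 T.2),
    restrictErase_monotone hd.1 T.2 T.1.2⟩
  invFun T := ⟨⟨equivFinOfInjective (extendErase_injective hd.1 T.1),
    extendErase_monotone hd T.2⟩, extendErase_of_eq hd.1 T.1 rfl⟩
  left_inv T := Subtype.ext (Subtype.ext (Equiv.ext (extendErase_restrictErase hd.1 T.2)))
  right_inv T := Subtype.ext (Equiv.ext (restrictErase_extendErase hd.1 T.1))

open scoped Classical in
theorem linExtCount_eq_sum_erase (hs : s.Nonempty) :
    linExtCount s = ∑ d ∈ s with Maximal (· ∈ s) d, linExtCount (s.erase d) := by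
  have hlast : #s - 1 < #s := by have := hs.card_pos; omega
  have e : LinExt s ≃ Σ x : s, {T : LinExt s // (T.1 x : ℕ) + 1 = #s} :=
    (Equiv.sigmaFiberEquiv fun T : LinExt s => T.1.symm ⟨_, hlast⟩).symm.trans
      (Equiv.sigmaCongrRight fun x => Equiv.subtypeEquivRight fun T => by
        simp only [Equiv.symm_apply_eq, Fin.ext_iff]
        omega)
  rw [linExtCount, Nat.card_congr e, Nat.card_sigma, sum_filter, ← sum_coe_sort s]
  refine Fintype.sum_congr _ _ fun x => ?_
  split_ifs with hx
  · exact Nat.card_congr (linExtTopEquiv hx)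
  · have : IsEmpty {T : LinExt s // (T.1 x : ℕ) + 1 = #s} :=
      ⟨fun T => hx (maximal_of_monotone_of_top T.1.2 T.2)⟩
    exact Nat.card_of_isEmpty

end LinearExtension

namespace YoungDiagram

/-- Removes every cell `≥ c`, which for a removable `c` is `c` alone. Unlike a removal guarded by
a proof, this total operation can be used freely inside sums. -/
def eraseCell (μ : YoungDiagram) (c : ℕ × ℕ) : YoungDiagram where
  cells := {x ∈ μ.cells | ¬ c ≤ x}
  isLowerSet x y hyx hx := by
    simp only [coe_filter, mem_cells, Set.mem_ofPred_eq] at hx ⊢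
    exact ⟨μ.isLowerSet hyx hx.1, fun h => hx.2 (h.trans hyx)⟩

/-- Adds every cell `≤ c`, which for an addable `c` is `c` alone. -/
def insertCell (μ : YoungDiagram) (c : ℕ × ℕ) : YoungDiagram where
  cells := μ.cells ∪ Iic c
  isLowerSet := by
    rw [coe_union, coe_Iic]
    exact μ.isLowerSet.union (isLowerSet_Iic c)

variable {μ : YoungDiagram} {c d x : ℕ × ℕ}

@[simp] lemma mem_eraseCell : x ∈ μ.eraseCell c ↔ x ∈ μ ∧ ¬ c ≤ x := by
  simp [← mem_cells, eraseCell]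

@[simp] lemma mem_insertCell : x ∈ μ.insertCell c ↔ x ∈ μ ∨ x ≤ c := by
  simp [← mem_cells, insertCell]

lemma cells_eraseCell (hc : Maximal (· ∈ μ) c) : (μ.eraseCell c).cells = μ.cells.erase c := by
  ext x
  simp only [mem_cells, mem_eraseCell, mem_erase]
  exact ⟨fun h => ⟨fun hxc => h.2 hxc.ge, h.1⟩,
    fun h => ⟨h.2, fun hcx => h.1 (le_antisymm (hc.2 h.2 hcx) hcx)⟩⟩

lemma cells_insertCell (hc : Minimal (· ∉ μ) c) :
    (μ.insertCell c).cells = insert c μ.cells := by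
  ext x
  simp only [mem_cells, mem_insertCell, Finset.mem_insert]
  refine ⟨fun h => h.elim Or.inr fun hxc => ?_, fun h => h.elim (fun h => Or.inr h.le) Or.inl⟩
  by_contra! hne
  exact hne.1 (le_antisymm hxc (hc.le_of_le hne.2 hxc))

lemma eraseCell_insertCell (hc : Minimal (· ∉ μ) c) : (μ.insertCell c).eraseCell c = μ := by
  refine SetLike.ext fun x => ?_
  simp only [mem_eraseCell, mem_insertCell]
  refine ⟨fun ⟨h, hcx⟩ => h.elim id fun hxc => ?_, fun hx => ⟨Or.inl hx, fun hcx => ?_⟩⟩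
  · by_contra hx
    exact hcx (hc.le_of_le hx hxc)
  · exact hc.1 (μ.isLowerSet hcx hx)

lemma insertCell_eraseCell (hc : Maximal (· ∈ μ) c) : (μ.eraseCell c).insertCell c = μ := by
  refine SetLike.ext fun x => ?_
  simp only [mem_eraseCell, mem_insertCell]
  refine ⟨fun h => h.elim And.left fun hxc => μ.isLowerSet hxc hc.1, fun hx => ?_⟩
  by_cases hcx : c ≤ x
  · exact Or.inr (hc.2 hx hcx)
  · exact Or.inl ⟨hx, hcx⟩

lemma eraseCell_insertCell_comm (h : ¬ d ≤ c) :
    (μ.insertCell c).eraseCell d = (μ.eraseCell d).insertCell c := by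
  refine SetLike.ext fun x => ?_
  simp only [mem_eraseCell, mem_insertCell]
  refine ⟨fun ⟨hx, hdx⟩ => hx.imp (⟨·, hdx⟩) id,
    fun hx => ⟨hx.imp And.left id, ?_⟩⟩
  rcases hx with hx | hxc
  · exact hx.2
  · exact fun hdx => h (hdx.trans hxc)

lemma maximal_insertCell (hc : c ∉ μ) : Maximal (· ∈ μ.insertCell c) c := by
  refine ⟨mem_insertCell.2 (Or.inr le_rfl), fun y hy hcy => ?_⟩
  rcases mem_insertCell.1 hy with hy | hyc
  · exact absurd (μ.isLowerSet hcy hy) hc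
  · exact hyc

lemma minimal_eraseCell (hc : c ∈ μ) : Minimal (· ∉ μ.eraseCell c) c := by
  refine ⟨fun h => (mem_eraseCell.1 h).2 le_rfl, fun y hy hyc => ?_⟩
  by_contra hcy
  exact hy (mem_eraseCell.2 ⟨μ.isLowerSet hyc hc, hcy⟩)

lemma minimal_and_maximal_insertCell_iff (hcd : c ≠ d) :
    Minimal (· ∉ μ) c ∧ Maximal (· ∈ μ.insertCell c) d ↔
      Maximal (· ∈ μ) d ∧ Minimal (· ∉ μ.eraseCell d) c := by
  simp only [minimal_iff_forall_lt, maximal_iff_forall_gt, mem_eraseCell, mem_insertCell,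
    not_not, not_or]
  constructor
  · rintro ⟨⟨hc, hlt⟩, hd, hgt⟩
    have hd' : d ∈ μ := hd.elim id fun hdc => hlt (lt_of_le_of_ne hdc hcd.symm)
    refine ⟨⟨hd', fun y hy => (hgt hy).1⟩, fun h => hc h.1,
      fun y hy => ⟨hlt hy, fun hdy => (hgt (lt_of_le_of_lt hdy hy)).2 le_rfl⟩⟩
  · rintro ⟨⟨hd, hgt⟩, hc, hlt⟩
    have hdc : ¬ d < c := fun h => (hlt h).2 le_rfl
    have hcμ : c ∉ μ := fun h => hc ⟨h, fun hdc' => hgt (lt_of_le_of_ne hdc' hcd.symm) h⟩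
    exact ⟨⟨hcμ, fun y hy => (hlt hy).1⟩, Or.inl hd,
      fun y hy => ⟨hgt hy, fun hyc => hdc (lt_of_lt_of_le hy hyc)⟩⟩

lemma card_insertCell (hc : Minimal (· ∉ μ) c) : (μ.insertCell c).card = μ.card + 1 := by
  rw [YoungDiagram.card, cells_insertCell hc, card_insert_of_notMem (by simpa using hc.1)]

lemma card_eraseCell (hc : Maximal (· ∈ μ) c) : (μ.eraseCell c).card + 1 = μ.card := by
  rw [YoungDiagram.card, cells_eraseCell hc, card_erase_add_one (by simpa using hc.1)]

lemma maximal_iff_rowLen {i j : ℕ} :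
    Maximal (· ∈ μ) (i, j) ↔ j + 1 = μ.rowLen i ∧ μ.rowLen (i + 1) ≤ j := by
  rw [maximal_iff_forall_gt, mem_iff_lt_rowLen]
  constructor
  · rintro ⟨hj, hgt⟩
    have h1 := hgt (show (i, j) < (i, j + 1) by simp [Prod.lt_iff])
    have h2 := hgt (show (i, j) < (i + 1, j) by simp [Prod.lt_iff])
    rw [mem_iff_lt_rowLen] at h1 h2
    omega
  · rintro ⟨hj, hi⟩
    refine ⟨by omega, fun ⟨a, b⟩ hab => ?_⟩
    rw [mem_iff_lt_rowLen]
    rw [Prod.lt_iff] at hab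
    rcases Nat.lt_or_ge i a with hia | hia
    · have := μ.rowLen_anti (i + 1) a hia
      omega
    · obtain rfl : a = i := by omega
      omega

lemma minimal_iff_rowLen {i j : ℕ} :
    Minimal (· ∉ μ) (i, j) ↔ j = μ.rowLen i ∧ ∀ k, i = k + 1 → j < μ.rowLen k := by
  rw [minimal_iff_forall_lt, mem_iff_lt_rowLen]
  simp only [not_not]
  constructor
  · rintro ⟨hj, hlt⟩
    have hrow : j = μ.rowLen i := by
      by_contra hne
      have hlt' : (i, μ.rowLen i) < (i, j) := by simp only [Prod.lt_iff]; omega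
      have := mem_iff_lt_rowLen.1 (hlt hlt')
      omega
    refine ⟨hrow, fun k hk => mem_iff_lt_rowLen.1 (hlt ?_)⟩
    simp [Prod.lt_iff, hk]
  · rintro ⟨hj, hk⟩
    refine ⟨by omega, fun ⟨a, b⟩ hab => mem_iff_lt_rowLen.2 ?_⟩
    rw [Prod.lt_iff] at hab
    rcases Nat.lt_or_ge a i with hai | hai
    · obtain ⟨k, rfl⟩ : ∃ k, i = k + 1 := ⟨i - 1, by omega⟩
      have := μ.rowLen_anti a k (by omega)
      have := hk k rfl
      omega
    · obtain rfl : a = i := by omega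
      omega

open scoped Classical in
noncomputable def removableCells (μ : YoungDiagram) : Finset (ℕ × ℕ) :=
  {c ∈ μ.cells | Maximal (· ∈ μ) c}

/-- The first free cell of row `0` and of every row directly below a removable cell. -/
noncomputable def addableCells (μ : YoungDiagram) : Finset (ℕ × ℕ) :=
  insert (0, μ.rowLen 0) (μ.removableCells.image fun c => (c.1 + 1, μ.rowLen (c.1 + 1)))

@[simp] lemma mem_removableCells : c ∈ μ.removableCells ↔ Maximal (· ∈ μ) c := by
  simp only [removableCells, mem_filter, mem_cells, and_iff_right_iff_imp]
  exact fun h => h.1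

@[simp] lemma mem_addableCells : c ∈ μ.addableCells ↔ Minimal (· ∉ μ) c := by
  obtain ⟨i, j⟩ := c
  simp only [addableCells, Finset.mem_insert, mem_image, mem_removableCells, Prod.exists,
    maximal_iff_rowLen, minimal_iff_rowLen, Prod.mk.injEq]
  constructor
  · rintro (⟨rfl, rfl⟩ | ⟨k, l, ⟨hl, hk⟩, rfl, rfl⟩)
    · simp
    · refine ⟨rfl, fun k' hk' => ?_⟩
      obtain rfl : k' = k := by omega
      omega
  · rintro ⟨rfl, hk⟩
    rcases i with _ | k
    · exact Or.inl ⟨rfl, rfl⟩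
    · have := hk k rfl
      exact Or.inr ⟨k, μ.rowLen k - 1, ⟨by omega, by omega⟩, rfl, rfl⟩

lemma card_addableCells (μ : YoungDiagram) : #μ.addableCells = #μ.removableCells + 1 := by
  rw [addableCells, card_insert_of_notMem (by simp), card_image_of_injOn]
  rintro ⟨i, j⟩ hij ⟨i', j'⟩ hij' h
  simp only [mem_coe, mem_removableCells, maximal_iff_rowLen, Prod.mk.injEq] at hij hij' h
  obtain rfl : i = i' := by omega
  simp only [Prod.mk.injEq, true_and]
  omega

lemma dimSYT_eq_linExtCount (μ : YoungDiagram) : dimSYT μ = linExtCount μ.cells :=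
  Nat.card_congr <| Equiv.subtypeEquivRight fun _ =>
    ⟨fun h _ _ hcd => h _ _ hcd.1 hcd.2, fun h _ _ h₁ h₂ => h ⟨h₁, h₂⟩⟩

lemma dimSYT_bot : dimSYT ⊥ = 1 := by
  rw [dimSYT_eq_linExtCount, cells_bot, linExtCount_empty]

lemma dimSYT_eq_sum_eraseCell (hμ : μ.cells.Nonempty) :
    dimSYT μ = ∑ d ∈ μ.removableCells, dimSYT (μ.eraseCell d) := by
  rw [dimSYT_eq_linExtCount, linExtCount_eq_sum_erase hμ]
  refine sum_congr (by ext; simp [removableCells]) fun d hd => ?_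
  rw [dimSYT_eq_linExtCount, cells_eraseCell (mem_removableCells.1 hd)]

lemma card_mul_sum_dimSYT_eraseCell (μ : YoungDiagram) :
    μ.card * ∑ d ∈ μ.removableCells, dimSYT (μ.eraseCell d) = μ.card * dimSYT μ := by
  rcases μ.cells.eq_empty_or_nonempty with hμ | hμ
  · simp [YoungDiagram.card, hμ]
  · rw [← dimSYT_eq_sum_eraseCell hμ]

lemma sum_sum_eraseCell_insertCell_comm {β : Type*} [AddCommMonoid β] (f : YoungDiagram → β)
    (μ : YoungDiagram) :
    ∑ c ∈ μ.addableCells, ∑ d ∈ (μ.insertCell c).removableCells.erase c,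
        f ((μ.insertCell c).eraseCell d) =
      ∑ d ∈ μ.removableCells, ∑ c ∈ (μ.eraseCell d).addableCells.erase d,
        f ((μ.eraseCell d).insertCell c) := by
  rw [sum_comm' fun c d => ?_]
  · refine sum_congr rfl fun d _ => sum_congr rfl fun c hc => ?_
    obtain ⟨hcd, hc⟩ := mem_erase.1 hc
    refine congrArg f (eraseCell_insertCell_comm fun hdc => ?_)
    exact (minimal_iff_forall_lt.1 (mem_addableCells.1 hc)).2 (lt_of_le_of_ne hdc hcd.symm)
      fun h => (mem_eraseCell.1 h).2 le_rfl
  · simp only [mem_erase, mem_addableCells, mem_removableCells]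
    by_cases hcd : c = d
    · simp [hcd]
    · have := minimal_and_maximal_insertCell_iff (μ := μ) hcd
      simp only [ne_eq, hcd, Ne.symm hcd, not_false_eq_true, true_and]
      tauto

theorem sum_dimSYT_insertCell (μ : YoungDiagram) :
    ∑ c ∈ μ.addableCells, dimSYT (μ.insertCell c) = (μ.card + 1) * dimSYT μ := by
  induction hn : μ.card using Nat.strong_induction_on generalizing μ with
  | _ n ih =>
  -- Expanding `dim (μ + c)` by the branching rule, the term `d = c` is `dim μ`; the others are
  -- the terms of the induction hypothesis for the `μ - d`, each missing its own term `c = d`.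
  have hbranch : ∀ c ∈ μ.addableCells, dimSYT (μ.insertCell c) = dimSYT μ + ∑ d ∈
      (μ.insertCell c).removableCells.erase c, dimSYT ((μ.insertCell c).eraseCell d) := by
    intro c hc
    have hc := mem_addableCells.1 hc
    rw [dimSYT_eq_sum_eraseCell ⟨c, by simp⟩, ← add_sum_erase _ _
      (mem_removableCells.2 (maximal_insertCell hc.1)), eraseCell_insertCell hc]
  have hinduct : ∀ d ∈ μ.removableCells, dimSYT μ +
      ∑ c ∈ (μ.eraseCell d).addableCells.erase d, dimSYT ((μ.eraseCell d).insertCell c) =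
        n * dimSYT (μ.eraseCell d) := by
    intro d hd
    have hd := mem_removableCells.1 hd
    have hcard := card_eraseCell hd
    nth_rw 1 [← insertCell_eraseCell hd]
    rw [add_sum_erase _ (fun c => dimSYT ((μ.eraseCell d).insertCell c))
      (mem_addableCells.2 (minimal_eraseCell hd.1)), ih _ (by omega) _ rfl, hcard, hn]
  have hR := sum_congr rfl hinduct
  rw [sum_add_distrib, sum_const, smul_eq_mul, ← mul_sum, ← hn,
    card_mul_sum_dimSYT_eraseCell, hn] at hR
  rw [sum_congr rfl hbranch, sum_add_distrib, sum_const, smul_eq_mul,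
    sum_sum_eraseCell_insertCell_comm, card_addableCells]
  linarith

lemma fst_lt_card {i j : ℕ} (h : (i, j) ∈ μ) : i < μ.card :=
  (mem_iff_lt_colLen.1 h).trans_le <|
    μ.colLen_eq_card.trans_le (card_le_card (filter_subset _ _))

lemma snd_lt_card {i j : ℕ} (h : (i, j) ∈ μ) : j < μ.card :=
  (mem_iff_lt_rowLen.1 h).trans_le <|
    μ.rowLen_eq_card.trans_le (card_le_card (filter_subset _ _))

lemma finite_setOf_card_eq (n : ℕ) : {μ : YoungDiagram | μ.card = n}.Finite := by
  refine Set.Finite.of_finite_image (f := cells)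
    ((range n ×ˢ range n).powerset.finite_toSet.subset ?_) fun _ _ _ _ h => YoungDiagram.ext h
  rintro _ ⟨μ, rfl, rfl⟩
  simp only [coe_powerset, Set.mem_preimage, Set.mem_powerset_iff, coe_subset]
  rintro ⟨i, j⟩ h
  rw [mem_cells] at h
  simp [fst_lt_card h, snd_lt_card h]

noncomputable def ofCard (n : ℕ) : Finset YoungDiagram := (finite_setOf_card_eq n).toFinset

@[simp] lemma mem_ofCard {n : ℕ} : μ ∈ ofCard n ↔ μ.card = n := by simp [ofCard]

lemma ofCard_zero : ofCard 0 = {⊥} := by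
  ext μ
  simp only [mem_ofCard, YoungDiagram.card, card_eq_zero, mem_singleton]
  exact ⟨fun h => YoungDiagram.ext (h.trans cells_bot.symm), fun h => h ▸ cells_bot⟩

theorem sum_ofCard_dimSYT_sq (n : ℕ) : ∑ μ ∈ ofCard n, dimSYT μ ^ 2 = n.factorial := by
  induction n with
  | zero => simp [ofCard_zero, dimSYT_bot]
  | succ n ih =>
  calc ∑ μ ∈ ofCard (n + 1), dimSYT μ ^ 2
      = ∑ μ ∈ ofCard (n + 1), ∑ d ∈ μ.removableCells,
          dimSYT μ * dimSYT (μ.eraseCell d) := by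
        refine sum_congr rfl fun μ hμ => ?_
        rw [sq, ← mul_sum, ← dimSYT_eq_sum_eraseCell (card_pos.1 (by simp_all))]
    _ = ∑ ν ∈ ofCard n, ∑ c ∈ ν.addableCells, dimSYT (ν.insertCell c) * dimSYT ν := by
        rw [sum_sigma', sum_sigma']
        refine sum_nbij' (fun p => ⟨p.1.eraseCell p.2, p.2⟩)
          (fun p => ⟨p.1.insertCell p.2, p.2⟩) ?_ ?_ ?_ ?_ ?_
        all_goals simp only [mem_sigma, mem_ofCard, mem_removableCells, mem_addableCells]
        · rintro ⟨μ, d⟩ ⟨hμ, hd⟩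
          exact ⟨by have := card_eraseCell hd; omega, minimal_eraseCell hd.1⟩
        · rintro ⟨ν, c⟩ ⟨hν, hc⟩
          exact ⟨by rw [card_insertCell hc, hν], maximal_insertCell hc.1⟩
        · rintro ⟨μ, d⟩ ⟨-, hd⟩
          simp [insertCell_eraseCell hd]
        · rintro ⟨ν, c⟩ ⟨-, hc⟩
          simp [eraseCell_insertCell hc]
        · rintro ⟨μ, d⟩ ⟨-, hd⟩
          simp [insertCell_eraseCell hd]
    _ = ∑ ν ∈ ofCard n, (n + 1) * dimSYT ν ^ 2 := by
        refine sum_congr rfl fun ν hν => ?_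
        rw [← sum_mul, sum_dimSYT_insertCell, mem_ofCard.1 hν, sq, mul_assoc]
    _ = (n + 1).factorial := by rw [← mul_sum, ih, Nat.factorial_succ]

end YoungDiagram

section Bounds

open YoungDiagram

noncomputable def plancherelWeight (q : ℝ) (μ : YoungDiagram) : ℝ :=
  ((dimSYT μ : ℝ) / μ.card.factorial) ^ 2 * q ^ μ.card

variable {q : ℝ}

lemma plancherelWeight_nonneg (hq : 0 ≤ q) (μ : YoungDiagram) : 0 ≤ plancherelWeight q μ := by
  unfold plancherelWeight
  positivity

lemma sum_ofCard_plancherelWeight (q : ℝ) (n : ℕ) :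
    ∑ μ ∈ ofCard n, plancherelWeight q μ = q ^ n / n.factorial := by
  have hw : ∀ μ ∈ ofCard n, plancherelWeight q μ =
      ((dimSYT μ ^ 2 : ℕ) : ℝ) * (q ^ n / (n.factorial : ℝ) ^ 2) := by
    intro μ hμ
    rw [plancherelWeight, mem_ofCard.1 hμ]
    push_cast
    ring
  have : (n.factorial : ℝ) ≠ 0 := by positivity
  rw [sum_congr rfl hw, ← sum_mul, ← Nat.cast_sum, sum_ofCard_dimSYT_sq]
  field_simp

lemma sum_plancherelWeight_le_exp (hq : 0 ≤ q) (s : Finset YoungDiagram) :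
    ∑ μ ∈ s, plancherelWeight q μ ≤ Real.exp q := by
  set N := s.sup YoungDiagram.card + 1
  have hs : ∀ μ ∈ s, μ.card ∈ range N := fun _ hμ =>
    mem_range.2 (Nat.lt_succ_of_le (le_sup hμ))
  calc ∑ μ ∈ s, plancherelWeight q μ
      = ∑ n ∈ range N, ∑ μ ∈ s with μ.card = n, plancherelWeight q μ :=
        (sum_fiberwise_of_maps_to hs _).symm
    _ ≤ ∑ n ∈ range N, ∑ μ ∈ ofCard n, plancherelWeight q μ :=
        sum_le_sum fun n _ => sum_le_sum_of_subset_of_nonneg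
          (fun μ hμ => mem_ofCard.2 (mem_filter.1 hμ).2)
          fun μ _ _ => plancherelWeight_nonneg hq μ
    _ = ∑ n ∈ range N, q ^ n / n.factorial :=
        sum_congr rfl fun n _ => sum_ofCard_plancherelWeight q n
    _ ≤ Real.exp q := Real.sum_le_exp_of_nonneg hq _

lemma summable_plancherelWeight (hq : 0 ≤ q) : Summable (plancherelWeight q) :=
  summable_of_sum_le (plancherelWeight_nonneg hq) (sum_plancherelWeight_le_exp hq)

lemma summable_plancherelWeight_mul (hq : 0 ≤ q) :
    Summable fun p : YoungDiagram × YoungDiagram =>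
      plancherelWeight q p.1 * plancherelWeight q p.2 :=
  (summable_plancherelWeight hq).mul_of_nonneg (summable_plancherelWeight hq)
    (plancherelWeight_nonneg hq) (plancherelWeight_nonneg hq)

lemma tsum_plancherelWeight_mul_le_exp (hq : 0 ≤ q) :
    ∑' p : YoungDiagram × YoungDiagram, plancherelWeight q p.1 * plancherelWeight q p.2 ≤
      Real.exp (2 * q) := by
  have hw := summable_plancherelWeight hq
  rw [← hw.tsum_mul_tsum hw (summable_plancherelWeight_mul hq), two_mul, Real.exp_add]
  exact mul_self_le_mul_self (tsum_nonneg (plancherelWeight_nonneg hq))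
    (hw.tsum_le_of_sum_le (sum_plancherelWeight_le_exp hq))

variable {σ : ℂ} {L : ℝ}

lemma pow_card_le_norm_prod_sq {ι : Type*} {s : Finset ι} {f : ι → ℂ} (hL : 0 ≤ L)
    (h : ∀ i ∈ s, L ≤ ‖f i‖ ^ 2) : L ^ #s ≤ ‖∏ i ∈ s, f i‖ ^ 2 := by
  rw [norm_prod, ← prod_pow, ← prod_const]
  exact prod_le_prod (fun _ _ => hL) h

lemma pow_le_norm_bFactor_sq (hL : 0 ≤ L) (hσ : ∀ k : ℤ, L ≤ ‖2 * σ - k‖ ^ 2)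
    (l m : YoungDiagram) : L ^ (l.card + m.card) ≤ ‖bFactor l m σ‖ ^ 2 := by
  rw [bFactor, norm_mul, mul_pow, pow_add]
  refine mul_le_mul (pow_card_le_norm_prod_sq hL fun c _ => ?_)
    (pow_card_le_norm_prod_sq hL fun c _ => ?_) (by positivity) (by positivity)
  · convert hσ (c.1 + c.2 + 1 - l.colLen c.2 - m.rowLen c.1) using 3
    push_cast
    ring
  · have hσ' (k : ℤ) : L ≤ ‖(k : ℂ) - 2 * σ‖ ^ 2 := norm_sub_rev (k : ℂ) _ ▸ hσ k
    convert hσ' (m.colLen c.2 - c.1 + l.rowLen c.1 - c.2 - 1) using 3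
    push_cast
    ring

lemma norm_blockTerm_le (hL : 0 < L) (hσ : ∀ k : ℤ, L ≤ ‖2 * σ - k‖ ^ 2) (t : ℂ)
    (p : YoungDiagram × YoungDiagram) :
    ‖blockTerm σ t p‖ ≤
      plancherelWeight (‖t‖ / L) p.1 * plancherelWeight (‖t‖ / L) p.2 := by
  obtain ⟨l, m⟩ := p
  have hb := pow_le_norm_bFactor_sq hL.le hσ l m
  calc ‖blockTerm σ t (l, m)‖
      = ((dimSYT l * dimSYT m : ℝ) / (l.card.factorial * m.card.factorial)) ^ 2
          * ‖t‖ ^ (l.card + m.card) / ‖bFactor l m σ‖ ^ 2 := by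
        simp [blockTerm]
    _ ≤ ((dimSYT l * dimSYT m : ℝ) / (l.card.factorial * m.card.factorial)) ^ 2
          * ‖t‖ ^ (l.card + m.card) / L ^ (l.card + m.card) := by
        gcongr
    _ = _ := by
        rw [plancherelWeight, plancherelWeight, div_pow ‖t‖, div_pow ‖t‖, pow_add, pow_add]
        ring

end Bounds

/-- If `2σ ∉ ℤ` and `L = min_{n∈ℤ} |2σ − n|²`, then for every `t ∈ ℂ` the sum of the
absolute values of the terms of the series defining `B(σ,t)` is at most `exp(2|t|/L)`;
in particular `|B(σ,t)| ≤ exp(2|t|/L)`. -/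
theorem blockSeries_bound (σ : ℂ) (hσ : ∀ n : ℤ, 2 * σ ≠ (n : ℂ)) (L : ℝ)
    (hL : IsLeast {x : ℝ | ∃ n : ℤ, x = ‖2 * σ - (n : ℂ)‖ ^ 2} L) :
    ∀ t : ℂ,
      (Summable fun p : YoungDiagram × YoungDiagram => ‖blockTerm σ t p‖) ∧
      (∑' p : YoungDiagram × YoungDiagram, ‖blockTerm σ t p‖)
        ≤ Real.exp (2 * ‖t‖ / L) ∧
      ‖∑' p : YoungDiagram × YoungDiagram, blockTerm σ t p‖
        ≤ Real.exp (2 * ‖t‖ / L) := by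
  obtain ⟨⟨n₀, hn₀⟩, hmin⟩ := hL
  have hσL : ∀ k : ℤ, L ≤ ‖2 * σ - k‖ ^ 2 := fun k => hmin ⟨k, rfl⟩
  have hL0 : 0 < L := hn₀ ▸ pow_pos (norm_pos_iff.2 (sub_ne_zero.2 (hσ n₀))) 2
  intro t
  have hq : 0 ≤ ‖t‖ / L := by positivity
  have hterm := norm_blockTerm_le hL0 hσL t
  have hsum : Summable fun p => ‖blockTerm σ t p‖ :=
    (summable_plancherelWeight_mul hq).of_nonneg_of_le (fun _ => norm_nonneg _) hterm
  have hbound : ∑' p, ‖blockTerm σ t p‖ ≤ Real.exp (2 * ‖t‖ / L) := by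
    rw [mul_div_assoc]
    exact (hsum.tsum_le_tsum hterm (summable_plancherelWeight_mul hq)).trans
      (tsum_plancherelWeight_mul_le_exp hq)
  exact ⟨hsum, hbound, (norm_tsum_le_tsum_norm hsum).trans hbound⟩
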